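/- Define ω : (0,1] → (0,∞) piecewise from a sequence 1 = x₀ > x₁ > x₂ > … → 0 by ω(x) := x_{2j+2} for x_{2j+2} ≤ x < x̃_{2j+1}, and ω(x) := x_{2j}^(1−k)·x^k for x̃_{2j+1} ≤ x ≤ x_{2j}, where x̃_{2j+1} := x_{2j}·x_{2j+1} and x_{2j+2} := x_{2j}·x_{2j+1}^k, under the assumptions 2·x_{2j+2} ≤ x̃_{2j+1} ≤ x_{2j+1} ≤ x_{2j}/2 for all j. Then ω is nondecreasing, t^(−k)·ω(t) is nonincreasing, and 0 < ω(x) ≤ x for all x ∈ (0,1]. -/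
import Mathlib


open Set Filter

/-- the piecewise-defined function `ω` from the two-scale sequence
construction (`x̃_{2j+1} = x_{2j}·x_{2j+1}`, `x_{2j+2} = x_{2j}·x_{2j+1}^k`, with
`2x_{2j+2} ≤ x̃_{2j+1} ≤ x_{2j+1} ≤ x_{2j}/2`) is nondecreasing on `(0,1]`,
`t^(−k)·ω(t)` is nonincreasing there, and `0 < ω(x) ≤ x` for `x ∈ (0,1]`. -/
theorem stmt13 (k : ℕ) (hk : 2 ≤ k) (x : ℕ → ℝ) (hx0 : x 0 = 1)
    (hpos : ∀ j, 0 < x j)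
    (hlim : Tendsto x atTop (nhds 0))
    (hrel : ∀ j, x (2 * j + 2) = x (2 * j) * (x (2 * j + 1)) ^ k)
    (hsep1 : ∀ j, 2 * x (2 * j + 2) ≤ x (2 * j) * x (2 * j + 1))
    (hsep2 : ∀ j, x (2 * j) * x (2 * j + 1) ≤ x (2 * j + 1))
    (hsep3 : ∀ j, x (2 * j + 1) ≤ x (2 * j) / 2)
    (ω : ℝ → ℝ)
    (hω1 : ∀ j, ∀ t : ℝ, x (2 * j + 2) ≤ t → t < x (2 * j) * x (2 * j + 1) →
      ω t = x (2 * j + 2))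
    (hω2 : ∀ j, ∀ t : ℝ, x (2 * j) * x (2 * j + 1) ≤ t → t ≤ x (2 * j) →
      ω t = t ^ k / (x (2 * j)) ^ (k - 1)) :
    (∀ t₁ t₂ : ℝ, 0 < t₁ → t₁ ≤ t₂ → t₂ ≤ 1 → ω t₁ ≤ ω t₂) ∧
    (∀ t₁ t₂ : ℝ, 0 < t₁ → t₁ ≤ t₂ → t₂ ≤ 1 → ω t₂ / t₂ ^ k ≤ ω t₁ / t₁ ^ k) ∧
    (∀ t : ℝ, 0 < t → t ≤ 1 → 0 < ω t ∧ ω t ≤ t) := by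
  classical
  obtain ⟨m, rfl⟩ : ∃ m, k = m + 1 := ⟨k - 1, by omega⟩
  simp only [Nat.add_sub_cancel] at hω2
  -- basic order facts
  have heven_lt : ∀ j, x (2 * j + 2) < x (2 * j) := by
    intro j
    have h1 := hsep1 j
    have h2 := hsep2 j
    have h3 := hsep3 j
    have := hpos (2 * j)
    linarith
  have heven_le : ∀ i j : ℕ, i ≤ j → x (2 * j) ≤ x (2 * i) := by
    intro i j h
    induction j, h using Nat.le_induction with
    | base => exact le_refl _
    | succ n hn ih =>
      have h2 : 2 * (n + 1) = 2 * n + 2 := by ring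
      rw [h2]
      exact le_trans (heven_lt n).le ih
  have htilde_lt : ∀ j, x (2 * j) * x (2 * j + 1) < x (2 * j) := by
    intro j
    have h2 := hsep2 j
    have h3 := hsep3 j
    have := hpos (2 * j)
    linarith
  have hlo_lt : ∀ j, x (2 * j + 2) < x (2 * j) * x (2 * j + 1) := by
    intro j
    have h1 := hsep1 j
    have := hpos (2 * j + 2)
    linarith
  have htilde_pos : ∀ j, 0 < x (2 * j) * x (2 * j + 1) :=
    fun j => mul_pos (hpos _) (hpos _)
  have htildepow : ∀ j, (x (2 * j) * x (2 * j + 1)) ^ (m + 1)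
      = x (2 * j) ^ m * x (2 * j + 2) := by
    intro j
    rw [hrel j]
    ring
  -- key bounds on a single level
  have hkey : ∀ j, ∀ t : ℝ, x (2 * j + 2) ≤ t → t ≤ x (2 * j) →
      x (2 * j + 2) ≤ ω t ∧ ω t ≤ t ∧
      t ^ (m + 1) ≤ x (2 * j) ^ m * ω t ∧
      x (2 * j + 2) ^ m * ω t ≤ t ^ (m + 1) := by
    intro j t hlo hhi
    have ht0 : 0 < t := lt_of_lt_of_le (hpos _) hlo
    by_cases htl : t < x (2 * j) * x (2 * j + 1)
    · rw [hω1 j t hlo htl]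
      refine ⟨le_refl _, hlo, ?_, ?_⟩
      · calc t ^ (m + 1) ≤ (x (2 * j) * x (2 * j + 1)) ^ (m + 1) :=
              pow_le_pow_left₀ ht0.le htl.le _
          _ = x (2 * j) ^ m * x (2 * j + 2) := htildepow j
      · calc x (2 * j + 2) ^ m * x (2 * j + 2) = x (2 * j + 2) ^ (m + 1) :=
              (pow_succ _ _).symm
          _ ≤ t ^ (m + 1) := pow_le_pow_left₀ (hpos _).le hlo _
    · push_neg at htl
      rw [hω2 j t htl hhi]
      have hxm : (0:ℝ) < x (2 * j) ^ m := pow_pos (hpos _) m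
      have heqq : x (2 * j) ^ m * (t ^ (m + 1) / x (2 * j) ^ m) = t ^ (m + 1) := by
        field_simp
      refine ⟨?_, ?_, le_of_eq heqq.symm, ?_⟩
      · rw [le_div_iff₀ hxm]
        calc x (2 * j + 2) * x (2 * j) ^ m = (x (2 * j) * x (2 * j + 1)) ^ (m + 1) := by
              rw [htildepow j]; ring
          _ ≤ t ^ (m + 1) := pow_le_pow_left₀ (htilde_pos j).le htl _
      · rw [div_le_iff₀ hxm]
        calc t ^ (m + 1) = t ^ m * t := (pow_succ _ _)
          _ ≤ x (2 * j) ^ m * t := by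
              have := pow_le_pow_left₀ ht0.le hhi m
              nlinarith
          _ = t * x (2 * j) ^ m := by ring
      · have hle : x (2 * j + 2) ^ m ≤ x (2 * j) ^ m :=
          pow_le_pow_left₀ (hpos _).le (heven_lt j).le m
        have hd : 0 ≤ t ^ (m + 1) / x (2 * j) ^ m := by positivity
        calc x (2 * j + 2) ^ m * (t ^ (m + 1) / x (2 * j) ^ m)
            ≤ x (2 * j) ^ m * (t ^ (m + 1) / x (2 * j) ^ m) :=
              mul_le_mul_of_nonneg_right hle hd
          _ = t ^ (m + 1) := heqq
  -- same-level monotonicity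
  have hSmono : ∀ j, ∀ t₁ t₂ : ℝ, x (2 * j + 2) ≤ t₁ → t₁ ≤ t₂ → t₂ ≤ x (2 * j) →
      ω t₁ ≤ ω t₂ := by
    intro j t₁ t₂ h1 h12 h2
    by_cases ht1 : t₁ < x (2 * j) * x (2 * j + 1)
    · rw [hω1 j t₁ h1 ht1]
      exact (hkey j t₂ (h1.trans h12) h2).1
    · push_neg at ht1
      have ht2 : x (2 * j) * x (2 * j + 1) ≤ t₂ := ht1.trans h12
      rw [hω2 j t₁ ht1 (h12.trans h2), hω2 j t₂ ht2 h2]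
      have ht10 : 0 ≤ t₁ := (lt_of_lt_of_le (hpos _) h1).le
      gcongr
      exact (pow_pos (hpos _) m).le
  -- same-level ratio monotonicity (cross-multiplied)
  have hSratio : ∀ j, ∀ t₁ t₂ : ℝ, x (2 * j + 2) ≤ t₁ → t₁ ≤ t₂ → t₂ ≤ x (2 * j) →
      ω t₂ * t₁ ^ (m + 1) ≤ ω t₁ * t₂ ^ (m + 1) := by
    intro j t₁ t₂ h1 h12 h2
    have ht10 : 0 < t₁ := lt_of_lt_of_le (hpos _) h1
    by_cases ht2 : t₂ < x (2 * j) * x (2 * j + 1)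
    · have ht1 : t₁ < x (2 * j) * x (2 * j + 1) := lt_of_le_of_lt h12 ht2
      rw [hω1 j t₁ h1 ht1, hω1 j t₂ (h1.trans h12) ht2]
      have hx2 : (0:ℝ) ≤ x (2 * j + 2) := (hpos _).le
      gcongr
    · push_neg at ht2
      rw [hω2 j t₂ ht2 h2]
      by_cases ht1 : t₁ < x (2 * j) * x (2 * j + 1)
      · rw [hω1 j t₁ h1 ht1]
        have ht1K : t₁ ^ (m + 1) ≤ x (2 * j + 2) * x (2 * j) ^ m := by
          calc t₁ ^ (m + 1) ≤ (x (2 * j) * x (2 * j + 1)) ^ (m + 1) :=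
                pow_le_pow_left₀ ht10.le ht1.le _
            _ = x (2 * j + 2) * x (2 * j) ^ m := by rw [htildepow j]; ring
        have ht20 : 0 < t₂ := ht10.trans_le h12
        have hd : (0:ℝ) ≤ t₂ ^ (m + 1) / x (2 * j) ^ m :=
          div_nonneg (pow_nonneg ht20.le _) (pow_nonneg (hpos _).le _)
        calc t₂ ^ (m + 1) / x (2 * j) ^ m * t₁ ^ (m + 1)
            ≤ t₂ ^ (m + 1) / x (2 * j) ^ m * (x (2 * j + 2) * x (2 * j) ^ m) :=
              mul_le_mul_of_nonneg_left ht1K hd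
          _ = x (2 * j + 2) * t₂ ^ (m + 1) := by
              have hxm : (x (2 * j) : ℝ) ^ m ≠ 0 := (pow_pos (hpos _) m).ne'
              field_simp
      · push_neg at ht1
        rw [hω2 j t₁ ht1 (h12.trans h2)]
        apply le_of_eq
        ring
  -- existence of a (least) level for each t
  have hex : ∀ t : ℝ, 0 < t → ∃ j, x (2 * j + 2) ≤ t := by
    intro t ht
    obtain ⟨N, hN⟩ := eventually_atTop.mp (hlim.eventually_lt_const ht)
    exact ⟨N, (hN (2 * N + 2) (by omega)).le⟩
  have hJ : ∀ t : ℝ, 0 < t → t ≤ 1 →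
      ∃ j, x (2 * j + 2) ≤ t ∧ t ≤ x (2 * j) ∧ ∀ i, x (2 * i + 2) ≤ t → j ≤ i := by
    intro t ht ht1
    refine ⟨Nat.find (hex t ht), Nat.find_spec (hex t ht), ?_,
      fun i hi => Nat.find_min' (hex t ht) hi⟩
    rcases Nat.eq_zero_or_pos (Nat.find (hex t ht)) with h0 | h0
    · rw [h0]
      simpa [hx0] using ht1
    · have hmin := Nat.find_min (hex t ht) (Nat.sub_lt h0 one_pos)
      push_neg at hmin
      have he : 2 * (Nat.find (hex t ht) - 1) + 2 = 2 * Nat.find (hex t ht) := by omega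
      rw [he] at hmin
      exact hmin.le
  -- main combined statement
  have main : ∀ t₁ t₂ : ℝ, 0 < t₁ → t₁ ≤ t₂ → t₂ ≤ 1 →
      ω t₁ ≤ ω t₂ ∧ ω t₂ * t₁ ^ (m + 1) ≤ ω t₁ * t₂ ^ (m + 1) := by
    intro t₁ t₂ h1 h12 h2
    obtain ⟨j₁, hj1a, hj1b, hj1min⟩ := hJ t₁ h1 (h12.trans h2)
    obtain ⟨j₂, hj2a, hj2b, hj2min⟩ := hJ t₂ (h1.trans_le h12) h2
    have hle : j₂ ≤ j₁ := hj2min j₁ (hj1a.trans h12)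
    rcases eq_or_lt_of_le hle with heq | hlt
    · subst heq
      exact ⟨hSmono j₂ t₁ t₂ hj1a h12 hj2b, hSratio j₂ t₁ t₂ hj1a h12 hj2b⟩
    · have hxx : x (2 * j₁) ≤ x (2 * j₂ + 2) := by
        have h := heven_le (j₂ + 1) j₁ hlt
        have he : 2 * (j₂ + 1) = 2 * j₂ + 2 := by ring
        rwa [he] at h
      obtain ⟨k1a, k1b, k1c, k1d⟩ := hkey j₁ t₁ hj1a hj1b
      obtain ⟨k2a, k2b, k2c, k2d⟩ := hkey j₂ t₂ hj2a hj2b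
      constructor
      · linarith
      · have hω1pos : 0 < ω t₁ := lt_of_lt_of_le (hpos _) k1a
        have hω2pos : 0 < ω t₂ := lt_of_lt_of_le (hpos _) k2a
        have hAB : x (2 * j₁) ^ m ≤ x (2 * j₂ + 2) ^ m :=
          pow_le_pow_left₀ (hpos _).le hxx m
        calc ω t₂ * t₁ ^ (m + 1)
            ≤ ω t₂ * (x (2 * j₁) ^ m * ω t₁) :=
              mul_le_mul_of_nonneg_left k1c hω2pos.le
          _ ≤ ω t₂ * (x (2 * j₂ + 2) ^ m * ω t₁) := by
              apply mul_le_mul_of_nonneg_left _ hω2pos.le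
              exact mul_le_mul_of_nonneg_right hAB hω1pos.le
          _ = (x (2 * j₂ + 2) ^ m * ω t₂) * ω t₁ := by ring
          _ ≤ t₂ ^ (m + 1) * ω t₁ := mul_le_mul_of_nonneg_right k2d hω1pos.le
          _ = ω t₁ * t₂ ^ (m + 1) := by ring
  refine ⟨fun t₁ t₂ a b c => (main t₁ t₂ a b c).1, ?_, ?_⟩
  · intro t₁ t₂ a b c
    have h := (main t₁ t₂ a b c).2
    have h1 : (0:ℝ) < t₁ ^ (m + 1) := pow_pos a _
    have h2 : (0:ℝ) < t₂ ^ (m + 1) := pow_pos (a.trans_le b) _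
    rw [div_le_div_iff₀ h2 h1]
    exact h
  · intro t ht ht1
    obtain ⟨j, hja, hjb, -⟩ := hJ t ht ht1
    obtain ⟨ka, kb, -, -⟩ := hkey j t hja hjb
    exact ⟨lt_of_lt_of_le (hpos _) ka, kb⟩
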